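/- arXiv:2212.06999 — 3 statements merged into one kernel-verified Lean document; each statement's English description precedes it below -/
import Mathlib

section
/- The Taylor complex is a free resolution of Q/I over Q: the complex 0 → T_r → ⋯ → T_1 → T_0 = Q with differentials τ is exact in homological degrees k ≥ 1, and the cokernel of τ_1 : T_1 → T_0 is isomorphic to Q/I. -/
/-!
The Taylor complex is graded by multidegree: `x^b ε_S` has degree `a = b + m_S`. Through
`ε_U ↦ (x^a / m_U) ε_U`, its strand in degree `a` is the augmented chain complex of the full
simplex on the vertices `{j | m_j ∣ x^a}`, and this vertex set is nonempty as soon as the strand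
meets a `T_k` with `k ≥ 1`. Coning off from a vertex `t` contracts the chain complex of a simplex,
so choosing a vertex in every degree gives a `𝕜`-linear map `h` with `τ h + h τ = id` on each
`T_k`, `k ≥ 1`. Finally `τ_1(ε_{j}) = m_j`, so the image of `τ_1` in `T_0 = Q` is `I`.
-/

open MvPolynomial

/-- The position `p_{t,S}` of `t` in `S ∪ {t}`: one plus the number of elements of `S`
smaller than `t`. -/
def taylorPos {r : ℕ} (S : Finset (Fin r)) (t : Fin r) : ℕ :=
  (S.filter fun s => s < t).card + 1

variable (𝕜 : Type*) [Field 𝕜] {n r : ℕ}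

/-- `m_S`: the lcm of the monomials `m_j = x^{v j}` for `j ∈ S` (equal to `1` when `S = ∅`). -/
noncomputable def taylorLcm (v : Fin r → (Fin n →₀ ℕ)) (S : Finset (Fin r)) :
    MvPolynomial (Fin n) 𝕜 :=
  monomial (S.sup v) 1

/-- The matrix entry of the Taylor differential: `(-1)^{k-i} m_S / m_{S∖{s}}`
(where `i = p_{s,S}` is the position of `s` in `S` and `k = |S|`). -/
noncomputable def taylorEntry (v : Fin r → (Fin n →₀ ℕ)) (S : Finset (Fin r)) (s : Fin r) :
    MvPolynomial (Fin n) 𝕜 :=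
  (-1) ^ (S.card - taylorPos S s) * monomial (S.sup v - (S.erase s).sup v) 1

/-- The matrix entry of the homotopy `σ`:
`(-1)^{k - p_{t,S} - 1} f_t m_t m_S / m_{S ∪ {t}}` (where `k = |S|`); the sign is written as
`(-1)^{k + p_{t,S} + 1}`, which agrees with `(-1)^{k - p_{t,S} - 1}` since the exponents have
the same parity. -/
noncomputable def htpyEntry (v : Fin r → (Fin n →₀ ℕ)) (f : Fin r → MvPolynomial (Fin n) 𝕜)
    (S : Finset (Fin r)) (t : Fin r) : MvPolynomial (Fin n) 𝕜 :=
  (-1) ^ (S.card + taylorPos S t + 1) *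
    (f t * monomial (v t + S.sup v - (insert t S).sup v) 1)

/-- The total module of the Taylor complex: the free `Q`-module with basis
`{ε_S : S ⊆ {1,…,r}}`; the basis element `ε_S` is `Finsupp.single S 1`. -/
abbrev TaylorModule (n r : ℕ) := Finset (Fin r) →₀ MvPolynomial (Fin n) 𝕜

/-- The Taylor differential `τ` on the total module,
`τ(ε_S) = Σ_{s ∈ S} (-1)^{|S| - p_{s,S}} (m_S / m_{S∖{s}}) ε_{S∖{s}}`. -/
noncomputable def taylorTau (v : Fin r → (Fin n →₀ ℕ)) :
    TaylorModule 𝕜 n r →ₗ[MvPolynomial (Fin n) 𝕜] TaylorModule 𝕜 n r :=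
  Finsupp.lsum (MvPolynomial (Fin n) 𝕜) fun S =>
    LinearMap.toSpanSingleton _ _
      (∑ s ∈ S, Finsupp.single (S.erase s) (taylorEntry 𝕜 v S s))

/-- The homotopy `σ` attached to a coefficient family `f` (with `a = Σ_j f_j m_j`):
`σ(ε_S) = Σ_{t ∉ S} (-1)^{|S| - p_{t,S} - 1} (f_t m_t m_S / m_{S∪{t}}) ε_{S∪{t}}`. -/
noncomputable def taylorHtpy (v : Fin r → (Fin n →₀ ℕ)) (f : Fin r → MvPolynomial (Fin n) 𝕜) :
    TaylorModule 𝕜 n r →ₗ[MvPolynomial (Fin n) 𝕜] TaylorModule 𝕜 n r :=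
  Finsupp.lsum (MvPolynomial (Fin n) 𝕜) fun S =>
    LinearMap.toSpanSingleton _ _
      (∑ t ∈ Sᶜ, Finsupp.single (insert t S) (htpyEntry 𝕜 v f S t))

/-- The `k`-th module of the Taylor complex: the free `Q`-module with basis
`{ε_S : S ⊆ {1,…,r}, |S| = k}`. -/
abbrev TaylorModuleGr (𝕜 : Type*) [Field 𝕜] (n r k : ℕ) :=
  {S : Finset (Fin r) // S.card = k} →₀ MvPolynomial (Fin n) 𝕜

/-- The Taylor differential `τ_{k+1} : T_{k+1} → T_k`. -/
noncomputable def taylorTauGr {𝕜 : Type*} [Field 𝕜] {n r : ℕ}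
    (v : Fin r → (Fin n →₀ ℕ)) (k : ℕ) :
    TaylorModuleGr 𝕜 n r (k + 1) →ₗ[MvPolynomial (Fin n) 𝕜] TaylorModuleGr 𝕜 n r k :=
  Finsupp.lsum (MvPolynomial (Fin n) 𝕜) fun S =>
    LinearMap.toSpanSingleton _ _
      (∑ s ∈ S.1.attach,
        Finsupp.single
          ⟨S.1.erase s.1, by simp [Finset.card_erase_of_mem s.2, S.2]⟩
          (taylorEntry 𝕜 v S.1 s.1))

open Finset

namespace Finset

section LinearOrder

variable {α : Type*} [LinearOrder α]

lemma card_filter_lt_erase_self (U : Finset α) (t : α) :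
    #{x ∈ U.erase t | t < x} = #{x ∈ U | t < x} := by
  rw [filter_erase, erase_eq_of_notMem (by simp)]

lemma card_filter_lt_insert_self (U : Finset α) (t : α) :
    #{x ∈ insert t U | t < x} = #{x ∈ U | t < x} := by
  rw [filter_insert, if_neg (lt_irrefl t)]

lemma card_filter_lt_erase_of_lt {s t : α} (hst : s < t) (U : Finset α) :
    #{x ∈ U.erase s | t < x} = #{x ∈ U | t < x} := by
  rw [filter_erase, erase_eq_of_notMem (by simp [hst.le])]

lemma card_filter_lt_erase_add_one {s t : α} (hst : s < t) {U : Finset α} (ht : t ∈ U) :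
    #{x ∈ U.erase t | s < x} + 1 = #{x ∈ U | s < x} := by
  rw [filter_erase, card_erase_add_one (mem_filter.mpr ⟨ht, hst⟩)]

/-- The two ways of deleting `s` and `t` from `U` carry opposite signs. -/
lemma odd_card_filter_lt_erase_add {U : Finset α} {s t : α} (hs : s ∈ U) (ht : t ∈ U)
    (hst : s ≠ t) :
    Odd (#{x ∈ U | s < x} + #{x ∈ U.erase s | t < x} +
      (#{x ∈ U | t < x} + #{x ∈ U.erase t | s < x})) := by
  wlog hlt : s < t generalizing s t
  · rw [add_comm]
    exact this ht hs hst.symm (hst.lt_or_gt.resolve_left hlt)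
  rw [card_filter_lt_erase_of_lt hlt, ← card_filter_lt_erase_add_one hlt ht, Nat.odd_iff]
  omega

end LinearOrder

section Sup

variable {α β : Type*} [DecidableEq α] [SemilatticeSup β] [OrderBot β] (f : α → β) {b : β}

lemma erase_mem_setOf_sup_le :
    ∀ U ∈ {U : Finset α | U.sup f ≤ b}, ∀ s, U.erase s ∈ {U | U.sup f ≤ b} :=
  fun U hU s => (sup_mono (erase_subset s U)).trans hU

lemma insert_mem_setOf_sup_le {t : α} (ht : f t ≤ b) :
    ∀ U ∈ {U : Finset α | U.sup f ≤ b}, insert t U ∈ {U | U.sup f ≤ b} :=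
  fun _ hU => sup_insert.trans_le (sup_le ht hU)

end Sup

end Finset

lemma neg_one_pow_add_neg_one_pow_of_odd {R : Type*} [Ring R] {p q : ℕ} (h : Odd (p + q)) :
    (-1 : R) ^ p + (-1) ^ q = 0 := by
  rcases Nat.even_or_odd p with hp | hp
  · rw [hp.neg_one_pow, (Nat.odd_add'.mp h |>.mpr hp).neg_one_pow, add_neg_cancel]
  · rw [hp.neg_one_pow, (Nat.odd_add.mp h |>.mp hp).neg_one_pow, neg_add_cancel]

namespace Finsupp

variable {R ι κ M : Type*}

section Semiring

variable [Semiring R]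

lemma linearCombination_mem_supported {F : Set ι} {G : Set κ} {w : ι → κ →₀ R}
    (hw : ∀ i ∈ F, w i ∈ supported R R G) {x : ι →₀ R} (hx : x ∈ supported R R F) :
    linearCombination R w x ∈ supported R R G :=
  Submodule.sum_mem _ fun i hi => Submodule.smul_mem _ _ (hw i (hx hi))

lemma eqOn_supported_of_single [AddCommMonoid M] [Module R M] {F : Set ι}
    {f g : (ι →₀ R) →ₗ[R] M} (h : ∀ i ∈ F, f (single i 1) = g (single i 1)) :
    Set.EqOn f g (supported R R F) := by
  rw [supported_eq_span_single]
  exact LinearMap.eqOn_span' (by rintro _ ⟨i, hi, rfl⟩; exact h i hi)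

end Semiring

lemma mvPolynomial_lhom_ext {σ : Type*} [CommSemiring R] [AddCommMonoid M] [Module R M]
    {f g : (ι →₀ MvPolynomial σ R) →ₗ[R] M}
    (h : ∀ i b, f (single i (monomial b 1)) = g (single i (monomial b 1))) : f = g :=
  lhom_ext' fun i => (basisMonomials σ R).ext fun b => by
    simpa only [coe_basisMonomials, LinearMap.comp_apply, lsingle_apply] using h i b

end Finsupp

section SimplexChains

variable (R : Type*) {α : Type*} [Ring R] [LinearOrder α]

noncomputable def simplexBoundary : (Finset α →₀ R) →ₗ[R] (Finset α →₀ R) :=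
  Finsupp.linearCombination R fun U =>
    ∑ s ∈ U, Finsupp.single (U.erase s) ((-1) ^ #{x ∈ U | s < x})

noncomputable def simplexCone (t : α) : (Finset α →₀ R) →ₗ[R] (Finset α →₀ R) :=
  Finsupp.linearCombination R fun U =>
    if t ∈ U then 0 else Finsupp.single (insert t U) ((-1) ^ #{x ∈ U | t < x})

variable {R}

lemma simplexBoundary_single (U : Finset α) (c : R) :
    simplexBoundary R (Finsupp.single U c) =
      ∑ s ∈ U, Finsupp.single (U.erase s) (c * (-1) ^ #{x ∈ U | s < x}) := by
  simp [simplexBoundary, Finset.smul_sum]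

lemma simplexCone_single (t : α) (U : Finset α) (c : R) :
    simplexCone R t (Finsupp.single U c) =
      if t ∈ U then 0 else Finsupp.single (insert t U) (c * (-1) ^ #{x ∈ U | t < x}) := by
  rw [simplexCone, Finsupp.linearCombination_single]
  split_ifs <;> simp [Finsupp.smul_single]

lemma simplexBoundary_simplexBoundary (x : Finset α →₀ R) :
    simplexBoundary R (simplexBoundary R x) = 0 := by
  induction x using Finsupp.induction_linear with
  | zero => simp only [map_zero]
  | add x y hx hy => rw [map_add, map_add, hx, hy, add_zero]
  | single U c =>
    simp only [simplexBoundary_single, map_sum, mul_assoc]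
    rw [← sum_finset_product' U.offDiag U (fun s => U.erase s) (by simp [and_comm, ne_comm])]
    refine sum_involution (fun p _ => p.swap) (fun p hp => ?_) (fun p hp _ => ?_)
      (fun p hp => by simpa [and_left_comm, ne_comm] using hp) (fun _ _ => rfl)
    · obtain ⟨hs, ht, hst⟩ := mem_offDiag.mp hp
      rw [Prod.fst_swap, Prod.snd_swap, erase_right_comm, ← Finsupp.single_add, ← pow_add,
        ← pow_add, ← mul_add,
        neg_one_pow_add_neg_one_pow_of_odd (odd_card_filter_lt_erase_add hs ht hst), mul_zero,
        Finsupp.single_zero]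
    · exact fun h => (mem_offDiag.mp hp).2.2 (congrArg Prod.snd h)

lemma simplexBoundary_simplexCone_add (t : α) (x : Finset α →₀ R) :
    simplexBoundary R (simplexCone R t x) + simplexCone R t (simplexBoundary R x) = x := by
  induction x using Finsupp.induction_linear with
  | zero => simp only [map_zero, add_zero]
  | add x y hx hy => rw [map_add, map_add, map_add, map_add, add_add_add_comm, hx, hy]
  | single U c =>
    have hsq (m : ℕ) : c * (-1 : R) ^ m * (-1) ^ m = c := by
      rw [mul_assoc, ← pow_add, Even.neg_one_pow ⟨m, rfl⟩, mul_one]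
    rw [simplexBoundary_single, map_sum]
    simp only [simplexCone_single]
    by_cases htU : t ∈ U
    · rw [if_pos htU, map_zero, zero_add, sum_eq_single_of_mem t htU
        (fun s _ hst => if_pos (mem_erase.mpr ⟨hst.symm, htU⟩)), if_neg (notMem_erase t U),
        insert_erase htU, card_filter_lt_erase_self, hsq]
    · rw [if_neg htU, simplexBoundary_single, sum_insert htU, erase_insert htU,
        card_filter_lt_insert_self, hsq, add_assoc, add_eq_left, ← sum_add_distrib]
      refine sum_eq_zero fun s hs => ?_
      have hst : s ≠ t := fun h => htU (h ▸ hs)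
      have hodd := odd_card_filter_lt_erase_add (mem_insert_of_mem hs) (mem_insert_self t U) hst
      rw [erase_insert htU, erase_insert_of_ne hst.symm, card_filter_lt_insert_self,
        card_filter_lt_insert_self] at hodd
      rw [if_neg (fun h => htU (mem_of_mem_erase h)), ← erase_insert_of_ne hst.symm,
        ← Finsupp.single_add, mul_assoc, mul_assoc, ← pow_add, ← pow_add, ← mul_add,
        neg_one_pow_add_neg_one_pow_of_odd (by convert hodd using 1; ring), mul_zero,
        Finsupp.single_zero]

variable {F : Set (Finset α)} {x : Finset α →₀ R}

lemma simplexBoundary_mem_supported (hF : ∀ U ∈ F, ∀ s, U.erase s ∈ F)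
    (hx : x ∈ Finsupp.supported R R F) : simplexBoundary R x ∈ Finsupp.supported R R F :=
  Finsupp.linearCombination_mem_supported
    (fun U hU => Submodule.sum_mem _ fun s _ => Finsupp.single_mem_supported R _ (hF U hU s)) hx

lemma simplexCone_mem_supported {t : α} (hF : ∀ U ∈ F, insert t U ∈ F)
    (hx : x ∈ Finsupp.supported R R F) : simplexCone R t x ∈ Finsupp.supported R R F := by
  refine Finsupp.linearCombination_mem_supported (fun U hU => ?_) hx
  split_ifs
  · exact Submodule.zero_mem _
  · exact Finsupp.single_mem_supported R _ (hF U hU)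

end SimplexChains

lemma card_sub_taylorPos {S : Finset (Fin r)} {s : Fin r} (hs : s ∈ S) :
    S.card - taylorPos S s = #{x ∈ S | s < x} := by
  have hsplit := card_filter_add_card_filter_not (s := S) (fun x => x < s)
  have hge : {x ∈ S | ¬x < s} = insert s {x ∈ S | s < x} := by
    ext x
    simp only [mem_filter, not_lt, mem_insert, le_iff_lt_or_eq]
    constructor
    · rintro ⟨hx, hlt | rfl⟩ <;> simp [*]
    · rintro (rfl | ⟨hx, hlt⟩) <;> simp [*]
  rw [hge, card_insert_of_notMem (by simp)] at hsplit
  unfold taylorPos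
  omega

section TaylorStrand

variable (v : Fin r → (Fin n →₀ ℕ))

/-- The strand of multidegree `a`; `a - U.sup v` truncates unless `m_U ∣ x^a`, so it is a chain
map only on chains supported on such `U`. -/
noncomputable def taylorStrand (a : Fin n →₀ ℕ) :
    (Finset (Fin r) →₀ 𝕜) →ₗ[𝕜] TaylorModule 𝕜 n r :=
  Finsupp.linearCombination 𝕜 fun U => Finsupp.single U (monomial (a - U.sup v) 1)

variable {𝕜}

lemma taylorStrand_single (a : Fin n →₀ ℕ) (U : Finset (Fin r)) (c : 𝕜) :
    taylorStrand 𝕜 v a (Finsupp.single U c) = Finsupp.single U (monomial (a - U.sup v) c) := by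
  rw [taylorStrand, Finsupp.linearCombination_single, Finsupp.smul_single, smul_monomial,
    smul_eq_mul, mul_one]

lemma taylorEntry_eq_monomial {S : Finset (Fin r)} {s : Fin r} (hs : s ∈ S) :
    taylorEntry 𝕜 v S s = monomial (S.sup v - (S.erase s).sup v) ((-1) ^ #{x ∈ S | s < x}) := by
  rw [taylorEntry, card_sub_taylorPos hs, ← map_one C, ← map_neg C, ← map_pow, C_mul_monomial,
    mul_one]

lemma taylorTau_single (U : Finset (Fin r)) (q : MvPolynomial (Fin n) 𝕜) :
    taylorTau 𝕜 v (Finsupp.single U q) =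
      ∑ s ∈ U, Finsupp.single (U.erase s) (q * taylorEntry 𝕜 v U s) := by
  simp only [taylorTau, Finsupp.lsum_single, LinearMap.toSpanSingleton_apply, smul_sum,
    Finsupp.smul_single, smul_eq_mul]

lemma taylorTau_taylorStrand {a : Fin n →₀ ℕ} {x : Finset (Fin r) →₀ 𝕜}
    (hx : x ∈ Finsupp.supported 𝕜 𝕜 {U | U.sup v ≤ a}) :
    taylorTau 𝕜 v (taylorStrand 𝕜 v a x) = taylorStrand 𝕜 v a (simplexBoundary 𝕜 x) := by
  refine Finsupp.eqOn_supported_of_single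
    (f := (taylorTau 𝕜 v).restrictScalars 𝕜 ∘ₗ taylorStrand 𝕜 v a)
    (g := taylorStrand 𝕜 v a ∘ₗ simplexBoundary 𝕜) (fun U hU => ?_) hx
  simp only [LinearMap.comp_apply, LinearMap.restrictScalars_apply, taylorStrand_single,
    taylorTau_single, simplexBoundary_single, map_sum, one_mul]
  refine sum_congr rfl fun s hs => ?_
  rw [taylorEntry_eq_monomial v hs, monomial_mul, one_mul,
    tsub_add_tsub_cancel hU (sup_mono (erase_subset s U))]

lemma taylorTau_taylorTau (x : TaylorModule 𝕜 n r) : taylorTau 𝕜 v (taylorTau 𝕜 v x) = 0 := by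
  induction x using Finsupp.induction_linear with
  | zero => simp only [map_zero]
  | add x y hx hy => rw [map_add, map_add, hx, hy, add_zero]
  | single U q =>
    have hU : Finsupp.single U 1 ∈ Finsupp.supported 𝕜 𝕜 {V | V.sup v ≤ U.sup v} :=
      Finsupp.single_mem_supported 𝕜 _ (show U.sup v ≤ U.sup v from le_rfl)
    have hone : Finsupp.single U 1 = taylorStrand 𝕜 v (U.sup v) (Finsupp.single U 1) := by
      rw [taylorStrand_single, tsub_self, monomial_zero', C_1]
    rw [← mul_one q, ← smul_eq_mul, ← Finsupp.smul_single, map_smul, map_smul, hone,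
      taylorTau_taylorStrand v hU,
      taylorTau_taylorStrand v (simplexBoundary_mem_supported (erase_mem_setOf_sup_le v) hU),
      simplexBoundary_simplexBoundary, map_zero, smul_zero]

end TaylorStrand

section TaylorContraction

variable (v : Fin r → (Fin n →₀ ℕ))

/-- `ε_U` in multidegree `a`, coned off from a chosen vertex `t` with `m_t ∣ x^a`. -/
noncomputable def taylorConeAt (a : Fin n →₀ ℕ) (U : Finset (Fin r)) : TaylorModule 𝕜 n r :=
  if h : ∃ t, v t ≤ a then taylorStrand 𝕜 v a (simplexCone 𝕜 h.choose (Finsupp.single U 1))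
  else 0

noncomputable def taylorContraction : TaylorModule 𝕜 n r →ₗ[𝕜] TaylorModule 𝕜 n r :=
  Finsupp.lsum 𝕜 fun U =>
    (basisMonomials (Fin n) 𝕜).constr 𝕜 fun b => taylorConeAt 𝕜 v (b + U.sup v) U

variable {𝕜}

lemma taylorContraction_single_monomial (U : Finset (Fin r)) (b : Fin n →₀ ℕ) :
    taylorContraction 𝕜 v (Finsupp.single U (monomial b 1)) =
      taylorConeAt 𝕜 v (b + U.sup v) U := by
  have hbasis : (monomial b 1 : MvPolynomial (Fin n) 𝕜) = basisMonomials (Fin n) 𝕜 b := by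
    rw [coe_basisMonomials]
  rw [taylorContraction, Finsupp.lsum_single, hbasis, Module.Basis.constr_basis]

lemma card_of_mem_support_taylorConeAt {a : Fin n →₀ ℕ} {U V : Finset (Fin r)}
    (hV : V ∈ (taylorConeAt 𝕜 v a U).support) : V.card = U.card + 1 := by
  unfold taylorConeAt at hV
  split_ifs at hV with h
  · rw [simplexCone_single] at hV
    split_ifs at hV with ht
    · simp at hV
    · rw [taylorStrand_single] at hV
      rw [mem_singleton.mp (Finsupp.support_single_subset hV), card_insert_of_notMem ht]
  · simp at hV

lemma taylorContraction_taylorStrand {a : Fin n →₀ ℕ} (h : ∃ t, v t ≤ a)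
    {x : Finset (Fin r) →₀ 𝕜} (hx : x ∈ Finsupp.supported 𝕜 𝕜 {U | U.sup v ≤ a}) :
    taylorContraction 𝕜 v (taylorStrand 𝕜 v a x) =
      taylorStrand 𝕜 v a (simplexCone 𝕜 h.choose x) := by
  refine Finsupp.eqOn_supported_of_single (f := taylorContraction 𝕜 v ∘ₗ taylorStrand 𝕜 v a)
    (g := taylorStrand 𝕜 v a ∘ₗ simplexCone 𝕜 h.choose) (fun U hU => ?_) hx
  rw [LinearMap.comp_apply, LinearMap.comp_apply, taylorStrand_single,
    taylorContraction_single_monomial, tsub_add_cancel_of_le hU, taylorConeAt, dif_pos h]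

lemma taylorTau_taylorContraction_add {U : Finset (Fin r)} (hU : U.Nonempty) (b : Fin n →₀ ℕ) :
    taylorTau 𝕜 v (taylorContraction 𝕜 v (Finsupp.single U (monomial b 1))) +
      taylorContraction 𝕜 v (taylorTau 𝕜 v (Finsupp.single U (monomial b 1))) =
      Finsupp.single U (monomial b 1) := by
  set a := b + U.sup v
  obtain ⟨s, hs⟩ := hU
  have h : ∃ t, v t ≤ a := ⟨s, (le_sup hs).trans le_add_self⟩
  have hx : Finsupp.single U 1 ∈ Finsupp.supported 𝕜 𝕜 {V | V.sup v ≤ a} :=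
    Finsupp.single_mem_supported 𝕜 _ (show U.sup v ≤ a from le_add_self)
  have hstrand : Finsupp.single U (monomial b 1) = taylorStrand 𝕜 v a (Finsupp.single U 1) := by
    rw [taylorStrand_single, add_tsub_cancel_right]
  rw [hstrand, taylorContraction_taylorStrand v h hx,
    taylorTau_taylorStrand v
      (simplexCone_mem_supported (insert_mem_setOf_sup_le v h.choose_spec) hx),
    taylorTau_taylorStrand v hx,
    taylorContraction_taylorStrand v h
      (simplexBoundary_mem_supported (erase_mem_setOf_sup_le v) hx),
    ← map_add, simplexBoundary_simplexCone_add]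

end TaylorContraction

section Graded

variable (v : Fin r → (Fin n →₀ ℕ))

variable (n) in
noncomputable def taylorInclusion (k : ℕ) :
    TaylorModuleGr 𝕜 n r k →ₗ[MvPolynomial (Fin n) 𝕜] TaylorModule 𝕜 n r :=
  Finsupp.lmapDomain _ _ Subtype.val

noncomputable def taylorContractionGr (k : ℕ) :
    TaylorModuleGr 𝕜 n r k →ₗ[𝕜] TaylorModuleGr 𝕜 n r (k + 1) :=
  Finsupp.lcomapDomain Subtype.val Subtype.val_injective ∘ₗ taylorContraction 𝕜 v ∘ₗ
    (taylorInclusion 𝕜 n k).restrictScalars 𝕜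

variable {𝕜}

lemma taylorInclusion_injective (k : ℕ) : Function.Injective (taylorInclusion 𝕜 n (r := r) k) :=
  Finsupp.mapDomain_injective Subtype.val_injective

lemma taylorInclusion_single {k : ℕ} (S : {S : Finset (Fin r) // S.card = k})
    (q : MvPolynomial (Fin n) 𝕜) :
    taylorInclusion 𝕜 n k (Finsupp.single S q) = Finsupp.single S.1 q :=
  Finsupp.mapDomain_single

lemma taylorInclusion_taylorTauGr (k : ℕ) (z : TaylorModuleGr 𝕜 n r (k + 1)) :
    taylorInclusion 𝕜 n k (taylorTauGr v k z) =
      taylorTau 𝕜 v (taylorInclusion 𝕜 n (k + 1) z) := by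
  induction z using Finsupp.induction_linear with
  | zero => simp only [map_zero]
  | add x y hx hy => rw [map_add, map_add, map_add, map_add, hx, hy]
  | single S q =>
    rw [taylorInclusion_single, taylorTau_single, ← sum_attach S.1]
    simp only [taylorTauGr, Finsupp.lsum_single, LinearMap.toSpanSingleton_apply, smul_sum,
      map_sum, Finsupp.smul_single, smul_eq_mul, taylorInclusion_single]

lemma taylorInclusion_taylorContractionGr (k : ℕ) (z : TaylorModuleGr 𝕜 n r k) :
    taylorInclusion 𝕜 n (k + 1) (taylorContractionGr 𝕜 v k z) =
      taylorContraction 𝕜 v (taylorInclusion 𝕜 n k z) := by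
  suffices (taylorInclusion 𝕜 n (k + 1)).restrictScalars 𝕜 ∘ₗ taylorContractionGr 𝕜 v k =
      taylorContraction 𝕜 v ∘ₗ (taylorInclusion 𝕜 n k).restrictScalars 𝕜 from
    LinearMap.congr_fun this z
  refine Finsupp.mvPolynomial_lhom_ext fun S b => ?_
  simp only [LinearMap.comp_apply, LinearMap.restrictScalars_apply, taylorContractionGr,
    Finsupp.lcomapDomain_apply]
  rw [taylorInclusion_single, taylorContraction_single_monomial]
  refine Finsupp.mapDomain_comapDomain _ Subtype.val_injective _ fun V hV => ?_
  rw [Subtype.range_coe_subtype]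
  exact (card_of_mem_support_taylorConeAt v hV).trans (congrArg (· + 1) S.2)

lemma taylorTauGr_taylorTauGr (k : ℕ) (z : TaylorModuleGr 𝕜 n r (k + 2)) :
    taylorTauGr v k (taylorTauGr v (k + 1) z) = 0 :=
  taylorInclusion_injective k <| by
    rw [taylorInclusion_taylorTauGr, taylorInclusion_taylorTauGr, taylorTau_taylorTau, map_zero]

lemma taylorTauGr_taylorContractionGr_add (k : ℕ) (z : TaylorModuleGr 𝕜 n r (k + 1)) :
    taylorTauGr v (k + 1) (taylorContractionGr 𝕜 v (k + 1) z) +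
      taylorContractionGr 𝕜 v k (taylorTauGr v k z) = z := by
  suffices (taylorTauGr v (k + 1)).restrictScalars 𝕜 ∘ₗ taylorContractionGr 𝕜 v (k + 1) +
      taylorContractionGr 𝕜 v k ∘ₗ (taylorTauGr v k).restrictScalars 𝕜 = LinearMap.id from
    LinearMap.congr_fun this z
  refine Finsupp.mvPolynomial_lhom_ext fun S b => taylorInclusion_injective (k + 1) ?_
  have hS : S.1.Nonempty := card_pos.mp (S.2.symm ▸ k.succ_pos)
  simp only [LinearMap.add_apply, LinearMap.comp_apply, LinearMap.restrictScalars_apply,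
    LinearMap.id_apply, map_add, taylorInclusion_taylorTauGr, taylorInclusion_taylorContractionGr,
    taylorInclusion_single]
  exact taylorTau_taylorContraction_add v hS b

end Graded

section Augmentation

variable {𝕜} (v : Fin r → (Fin n →₀ ℕ))

instance : Subsingleton {S : Finset (Fin r) // S.card = 0} :=
  ⟨fun S T => Subtype.ext ((card_eq_zero.mp S.2).trans (card_eq_zero.mp T.2).symm)⟩

lemma taylorTauGr_zero_single (j : Fin r) (q : MvPolynomial (Fin n) 𝕜) :
    taylorTauGr v 0 (Finsupp.single ⟨{j}, card_singleton j⟩ q) =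
      Finsupp.single ⟨∅, card_empty⟩ (q * monomial (v j) 1) := by
  refine taylorInclusion_injective 0 ?_
  rw [taylorInclusion_taylorTauGr, taylorInclusion_single, taylorInclusion_single,
    taylorTau_single, sum_singleton, taylorEntry_eq_monomial v (mem_singleton_self j),
    erase_singleton, sup_singleton, sup_empty, bot_eq_zero, tsub_zero, filter_singleton,
    if_neg (lt_irrefl j), card_empty, pow_zero]

lemma map_range_taylorTauGr_zero :
    (LinearMap.range (taylorTauGr (𝕜 := 𝕜) v 0)).map
        (Finsupp.uniqueLinearEquiv (MvPolynomial (Fin n) 𝕜) (MvPolynomial (Fin n) 𝕜)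
          (⟨∅, card_empty⟩ : {S : Finset (Fin r) // S.card = 0})).toLinearMap =
      Ideal.span (Set.range fun j => monomial (v j) (1 : 𝕜)) := by
  set e := Finsupp.uniqueLinearEquiv (MvPolynomial (Fin n) 𝕜) (MvPolynomial (Fin n) 𝕜)
    (⟨∅, card_empty⟩ : {S : Finset (Fin r) // S.card = 0})
  have he (j : Fin r) :
      e (taylorTauGr v 0 (Finsupp.single ⟨{j}, card_singleton j⟩ 1)) = monomial (v j) 1 := by
    rw [taylorTauGr_zero_single, Finsupp.uniqueLinearEquiv_apply, Finsupp.single_eq_same, one_mul]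
  have hτ : e.toLinearMap ∘ₗ taylorTauGr v 0 =
      Finsupp.linearCombination _ fun S => e (taylorTauGr v 0 (Finsupp.single S 1)) :=
    Finsupp.lhom_ext fun S q => by
      rw [LinearMap.comp_apply, Finsupp.linearCombination_single, ← map_smul, ← map_smul,
        Finsupp.smul_single_one, LinearEquiv.coe_toLinearMap]
  have hrange : Set.range (fun S => e (taylorTauGr v 0 (Finsupp.single S 1))) =
      Set.range fun j => monomial (v j) (1 : 𝕜) := by
    ext m
    constructor
    · rintro ⟨S, rfl⟩
      obtain ⟨j, hj⟩ := card_eq_one.mp S.2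
      obtain rfl : S = ⟨{j}, card_singleton j⟩ := Subtype.ext hj
      exact ⟨j, (he j).symm⟩
    · rintro ⟨j, rfl⟩
      exact ⟨_, he j⟩
  rw [← LinearMap.range_comp, hτ, Finsupp.range_linearCombination, hrange]

end Augmentation

/-- The Taylor complex is a free resolution of `Q/I` over `Q`: the complex
`0 → T_r → ⋯ → T_1 → T_0 = Q` with differentials `τ` is exact in homological degrees
`k ≥ 1` (i.e. exact at `T_{k+1}` for every `k ≥ 0`), and the cokernel of
`τ_1 : T_1 → T_0` is isomorphic to `Q/I`, where `I = ⟨m_1, …, m_r⟩` is generated by the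
monomials `m_j = x^{v j}`. -/
theorem taylor_is_resolution {𝕜 : Type*} [Field 𝕜] {n r : ℕ}
    (v : Fin r → (Fin n →₀ ℕ)) :
    (∀ k : ℕ, Function.Exact (taylorTauGr v (k + 1)) (taylorTauGr (𝕜 := 𝕜) v k)) ∧
    Nonempty
      ((TaylorModuleGr 𝕜 n r 0 ⧸ LinearMap.range (taylorTauGr (𝕜 := 𝕜) v 0)) ≃ₗ[MvPolynomial (Fin n) 𝕜]
        (MvPolynomial (Fin n) 𝕜 ⧸
          Ideal.span (Set.range fun j => monomial (v j) (1 : 𝕜)))) := by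
  refine ⟨fun k => ?_, ⟨Submodule.Quotient.equiv _ _ _ (map_range_taylorTauGr_zero v)⟩⟩
  refine Function.Exact.of_comp_of_mem_range (funext (taylorTauGr_taylorTauGr v k))
    fun z hz => ⟨taylorContractionGr 𝕜 v (k + 1) z, ?_⟩
  simpa [hz] using taylorTauGr_taylorContractionGr_add v k z
end

section
/- For every i ∈ {1,…,c}, the map σ_i squares to zero: for every subset S ⊆ {1,…,r}, σ_i(σ_i(ε_S)) = 0, i.e., the composition σ_i ∘ σ_i : T_k → T_{k+2} is the zero map. -/
open MvPolynomial

variable (𝕜 : Type*) [Field 𝕜] {n r : ℕ}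

/-!
Applying `σ` twice to `ε_S` gives a sum over ordered pairs `(t, u)` of distinct indices outside
`S`, with coefficient `± f_t f_u m_t m_u m_S / m_{S ∪ {t,u}}` in front of `ε_{S ∪ {t,u}}`. The
coefficient is symmetric in `t` and `u` except for its sign: inserting the smaller of the two
first shifts the position of the larger one by one, so the pairs `(t, u)` and `(u, t)` carry
opposite signs and cancel.
-/

lemma neg_one_pow_eq_neg_of_odd_add {R : Type*} [Monoid R] [HasDistribNeg R] {a b : ℕ}
    (h : Odd (a + b)) : (-1 : R) ^ a = -(-1) ^ b := by
  calc (-1 : R) ^ a = (-1) ^ (a + b) * (-1) ^ b := by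
        rw [pow_add, mul_assoc, ← pow_add, ← two_mul, (even_two_mul b).neg_one_pow, mul_one]
    _ = -(-1) ^ b := by rw [h.neg_one_pow, neg_one_mul]

lemma tsub_add_add_tsub_eq {α : Type*} [AddCommMonoid α] [PartialOrder α]
    [CanonicallyOrderedAdd α] [Sub α] [OrderedSub α] [AddLeftReflectLE α] {a b c d : α}
    (hb : b ≤ a) (hc : c ≤ d + b) :
    a - b + (d + b - c) = a + d - c := by
  rw [← add_tsub_assoc_of_le hc, ← add_assoc, add_right_comm, tsub_add_cancel_of_le hb]

lemma Finset.sum_sum_erase_eq_zero_of_antisymm {α M : Type*} [DecidableEq α] [AddCommGroup M]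
    (s : Finset α) (F : α → α → M) (h : ∀ t ∈ s, ∀ u ∈ s, t ≠ u → F t u = -F u t) :
    ∑ t ∈ s, ∑ u ∈ s.erase t, F t u = 0 := by
  rw [← Finset.sum_sigma s (fun t => s.erase t) (fun p => F p.1 p.2)]
  refine Finset.sum_involution (fun p _ => ⟨p.2, p.1⟩) ?_ ?_ ?_ fun _ _ => rfl
  · rintro ⟨t, u⟩ hp
    simp only [Finset.mem_sigma, Finset.mem_erase] at hp
    rw [h t hp.1 u hp.2.2 (Ne.symm hp.2.1), neg_add_cancel]
  · rintro ⟨t, u⟩ hp _ hswap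
    simp only [Finset.mem_sigma, Finset.mem_erase] at hp
    exact hp.2.1 (congrArg Sigma.fst hswap)
  · rintro ⟨t, u⟩ hp
    simp only [Finset.mem_sigma, Finset.mem_erase] at hp ⊢
    exact ⟨hp.2.2, Ne.symm hp.2.1, hp.1⟩

lemma taylorPos_insert {S : Finset (Fin r)} {t : Fin r} (ht : t ∉ S) (u : Fin r) :
    taylorPos (insert t S) u = if t < u then taylorPos S u + 1 else taylorPos S u := by
  unfold taylorPos
  rw [Finset.filter_insert]
  split
  · rw [Finset.card_insert_of_notMem fun h => ht (Finset.mem_filter.mp h).1]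
  · rfl

lemma taylorPos_insert_add_taylorPos_insert {S : Finset (Fin r)} {t u : Fin r}
    (ht : t ∉ S) (hu : u ∉ S) (htu : t ≠ u) :
    taylorPos (insert t S) u + taylorPos (insert u S) t = taylorPos S u + taylorPos S t + 1 := by
  rw [taylorPos_insert ht, taylorPos_insert hu]
  rcases htu.lt_or_gt with h | h
  · rw [if_pos h, if_neg h.asymm]; ring
  · rw [if_neg h.asymm, if_pos h]; ring

section Htpy

variable {𝕜}

lemma htpyEntry_mul_htpyEntry_insert (v : Fin r → (Fin n →₀ ℕ))
    (f : Fin r → MvPolynomial (Fin n) 𝕜) (S : Finset (Fin r)) (t u : Fin r) :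
    htpyEntry 𝕜 v f S t * htpyEntry 𝕜 v f (insert t S) u
      = (-1) ^ ((S.card + taylorPos S t + 1) + ((insert t S).card + taylorPos (insert t S) u + 1))
          * (f t * f u * monomial (v t + v u + S.sup v - (insert u (insert t S)).sup v) 1) := by
  have hsup {T : Finset (Fin r)} {s : Fin r} : (insert s T).sup v ≤ v s + T.sup v := by
    rw [Finset.sup_insert]; exact sup_le le_self_add le_add_self
  have hmon : monomial (v t + S.sup v - (insert t S).sup v) (1 : 𝕜)
      * monomial (v u + (insert t S).sup v - (insert u (insert t S)).sup v) 1
      = monomial (v t + v u + S.sup v - (insert u (insert t S)).sup v) 1 := by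
    rw [monomial_mul, mul_one, tsub_add_add_tsub_eq hsup hsup, add_right_comm]
  rw [htpyEntry, htpyEntry, pow_add, ← hmon]
  ring

lemma htpyEntry_mul_htpyEntry_insert_antisymm (v : Fin r → (Fin n →₀ ℕ))
    (f : Fin r → MvPolynomial (Fin n) 𝕜) {S : Finset (Fin r)} {t u : Fin r}
    (ht : t ∉ S) (hu : u ∉ S) (htu : t ≠ u) :
    htpyEntry 𝕜 v f S t * htpyEntry 𝕜 v f (insert t S) u
      = -(htpyEntry 𝕜 v f S u * htpyEntry 𝕜 v f (insert u S) t) := by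
  rw [htpyEntry_mul_htpyEntry_insert, htpyEntry_mul_htpyEntry_insert, Finset.insert_comm u t,
    add_comm (v u) (v t)]
  have hodd : Odd ((S.card + taylorPos S t + 1)
      + ((insert t S).card + taylorPos (insert t S) u + 1)
      + ((S.card + taylorPos S u + 1) + ((insert u S).card + taylorPos (insert u S) t + 1))) := by
    have hpos := taylorPos_insert_add_taylorPos_insert ht hu htu
    rw [Finset.card_insert_of_notMem ht, Finset.card_insert_of_notMem hu]
    exact ⟨2 * S.card + taylorPos S t + taylorPos S u + 3, by omega⟩
  rw [neg_one_pow_eq_neg_of_odd_add hodd]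
  ring

lemma taylorHtpy_single (v : Fin r → (Fin n →₀ ℕ)) (f : Fin r → MvPolynomial (Fin n) 𝕜)
    (S : Finset (Fin r)) (b : MvPolynomial (Fin n) 𝕜) :
    taylorHtpy 𝕜 v f (Finsupp.single S b)
      = ∑ t ∈ Sᶜ, Finsupp.single (insert t S) (b * htpyEntry 𝕜 v f S t) := by
  simp only [taylorHtpy, Finsupp.lsum_single, LinearMap.toSpanSingleton_apply, Finset.smul_sum,
    Finsupp.smul_single, smul_eq_mul]

lemma taylorHtpy_taylorHtpy_single_one (v : Fin r → (Fin n →₀ ℕ))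
    (f : Fin r → MvPolynomial (Fin n) 𝕜) (S : Finset (Fin r)) :
    taylorHtpy 𝕜 v f (taylorHtpy 𝕜 v f (Finsupp.single S 1)) = 0 := by
  simp only [taylorHtpy_single, map_sum, one_mul, Finset.compl_insert]
  refine Finset.sum_sum_erase_eq_zero_of_antisymm Sᶜ _ fun t ht u hu htu => ?_
  rw [Finset.mem_compl] at ht hu
  rw [htpyEntry_mul_htpyEntry_insert_antisymm v f ht hu htu, Finset.insert_comm u t,
    Finsupp.single_neg]

lemma taylorHtpy_comp_self (v : Fin r → (Fin n →₀ ℕ)) (f : Fin r → MvPolynomial (Fin n) 𝕜) :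
    taylorHtpy 𝕜 v f ∘ₗ taylorHtpy 𝕜 v f = 0 :=
  Finsupp.lhom_ext' fun S => LinearMap.ext_ring (taylorHtpy_taylorHtpy_single_one v f S)

end Htpy

theorem taylor_htpy_squared_zero_general {𝕜 : Type*} [Field 𝕜] {n r c : ℕ}
    (v : Fin r → (Fin n →₀ ℕ))
    (f : Fin c → Fin r → MvPolynomial (Fin n) 𝕜) :
    ∀ i : Fin c,
      (∀ S : Finset (Fin r),
        taylorHtpy 𝕜 v (f i) (taylorHtpy 𝕜 v (f i) (Finsupp.single S 1)) = 0) ∧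
      taylorHtpy 𝕜 v (f i) ∘ₗ taylorHtpy 𝕜 v (f i) = 0 :=
  fun i => ⟨taylorHtpy_taylorHtpy_single_one v (f i), taylorHtpy_comp_self v (f i)⟩

/-- For every `i ∈ {1,…,c}`, the homotopy `σ_i` squares to zero: for every
subset `S ⊆ {1,…,r}`, `σ_i(σ_i(ε_S)) = 0`, i.e. `σ_i ∘ σ_i : T_k → T_{k+2}` is the zero map.
Here `m_j = x^{v j}` and `a_i = Σ_j f_{i,j} m_j`. -/
theorem taylor_htpy_squared_zero {𝕜 : Type*} [Field 𝕜] {n r c : ℕ}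
    (v : Fin r → (Fin n →₀ ℕ)) (a : Fin c → MvPolynomial (Fin n) 𝕜)
    (f : Fin c → Fin r → MvPolynomial (Fin n) 𝕜)
    (ha : ∀ i, a i = ∑ j : Fin r, f i j * monomial (v j) 1) :
    ∀ i : Fin c,
      (∀ S : Finset (Fin r),
        taylorHtpy 𝕜 v (f i) (taylorHtpy 𝕜 v (f i) (Finsupp.single S 1)) = 0) ∧
      taylorHtpy 𝕜 v (f i) ∘ₗ taylorHtpy 𝕜 v (f i) = 0 :=
  taylor_htpy_squared_zero_general v f
end

section
/- In Q = 𝕜[x,y,z], the 4×4 matrices A = [[x², y², z², 0], [x, −z, 0, z²], [0, 0, −z, −y²], [0, 0, −x, x²]] and B = [[z, y², z², 0], [x, −x², 0, z²], [0, 0, −x², −y²], [0, 0, −x, z]] satisfy A·B = (x²z + xy²)·I₄ and B·A = (x²z + xy²)·I₄; that is, (A, B) is a matrix factorization of x²z + xy². -/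
open MvPolynomial

section TailMaps

variable {R : Type*} [CommRing R]

def tailMapA (x y z : R) : Matrix (Fin 4) (Fin 4) R :=
  !![x^2, y^2, z^2, 0;
     x,   -z,  0,   z^2;
     0,   0,   -z,  -y^2;
     0,   0,   -x,  x^2]

def tailMapB (x y z : R) : Matrix (Fin 4) (Fin 4) R :=
  !![z, y^2,  z^2,  0;
     x, -x^2, 0,    z^2;
     0, 0,    -x^2, -y^2;
     0, 0,    -x,   z]

theorem tailMapA_mul_tailMapB (x y z : R) :
    tailMapA x y z * tailMapB x y z = (x^2 * z + x * y^2) • (1 : Matrix (Fin 4) (Fin 4) R) := by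
  ext i j
  fin_cases i <;> fin_cases j <;>
    simp [tailMapA, tailMapB, Matrix.mul_apply, Fin.sum_univ_four] <;> ring

theorem tailMapB_mul_tailMapA (x y z : R) :
    tailMapB x y z * tailMapA x y z = (x^2 * z + x * y^2) • (1 : Matrix (Fin 4) (Fin 4) R) := by
  ext i j
  fin_cases i <;> fin_cases j <;>
    simp [tailMapA, tailMapB, Matrix.mul_apply, Fin.sum_univ_four] <;> ring

end TailMaps

/-- In `Q = 𝕜[x,y,z]`, the matrices
`A = [[x², y², z², 0], [x, −z, 0, z²], [0, 0, −z, −y²], [0, 0, −x, x²]]` and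
`B = [[z, y², z², 0], [x, −x², 0, z²], [0, 0, −x², −y²], [0, 0, −x, z]]` satisfy
`A·B = (x²z + xy²)·I₄` and `B·A = (x²z + xy²)·I₄`, i.e. `(A, B)` is a matrix factorization
of `x²z + xy²`. -/
theorem matrix_factorization_example {𝕜 : Type*} [Field 𝕜] :
    let x : MvPolynomial (Fin 3) 𝕜 := X 0
    let y : MvPolynomial (Fin 3) 𝕜 := X 1
    let z : MvPolynomial (Fin 3) 𝕜 := X 2
    let A : Matrix (Fin 4) (Fin 4) (MvPolynomial (Fin 3) 𝕜) :=
      !![x^2, y^2, z^2, 0;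
         x,   -z,  0,   z^2;
         0,   0,   -z,  -y^2;
         0,   0,   -x,  x^2]
    let B : Matrix (Fin 4) (Fin 4) (MvPolynomial (Fin 3) 𝕜) :=
      !![z, y^2,  z^2,  0;
         x, -x^2, 0,    z^2;
         0, 0,    -x^2, -y^2;
         0, 0,    -x,   z]
    A * B = (x^2 * z + x * y^2) • (1 : Matrix (Fin 4) (Fin 4) (MvPolynomial (Fin 3) 𝕜)) ∧
    B * A = (x^2 * z + x * y^2) • (1 : Matrix (Fin 4) (Fin 4) (MvPolynomial (Fin 3) 𝕜)) :=
  ⟨tailMapA_mul_tailMapB (X 0) (X 1) (X 2), tailMapB_mul_tailMapA (X 0) (X 1) (X 2)⟩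
end
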